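/- Inverse optimization identity for optimal market views (Eq. 12): let Σ and Ω be symmetric positive definite n×n real matrices, τ > 0, δ > 0, Π ∈ ℝ^n, and w* ∈ ℝ^n. Define Q* = δ [Ω(τΣ)^{-1} + I] [Σ + ((τΣ)^{-1} + Ω^{-1})^{-1}] w* − Ω (τΣ)^{-1} Π. Then, setting Σ̄ = Σ + [(τΣ)^{-1} + Ω^{-1}]^{-1} and μ̄ = [(τΣ)^{-1} + Ω^{-1}]^{-1} [(τΣ)^{-1} Π + Ω^{-1} Q*], one has (δ Σ̄)^{-1} μ̄ = w*; that is, the views with expected return vector Q* make the Black-Litterman optimal portfolio equal to the prescribed weights w*. -/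

import Mathlib

open Matrix

/-!
With `A = (τΣ)⁻¹`, multiplying `Q*` by `Ω⁻¹` turns the factor `Ω A + 1` into `A + Ω⁻¹`, so
`A Π + Ω⁻¹ Q* = δ (A + Ω⁻¹) Σ̄ w*`: the prior term cancels and the factor `A + Ω⁻¹` is
undone by `(A + Ω⁻¹)⁻¹`, leaving `μ̄ = δ Σ̄ w*`. Since `Σ̄` is positive definite, `δ Σ̄` is
invertible and `(δ Σ̄)⁻¹ μ̄ = w*`.
-/

section

variable {ι K : Type*} [Fintype ι] [DecidableEq ι] [Field K]

namespace Matrix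

theorem nonsing_inv_mulVec_mulVec {M : Matrix ι ι K} (hM : IsUnit M) (v : ι → K) :
    M⁻¹ *ᵥ (M *ᵥ v) = v := by
  rw [mulVec_mulVec, nonsing_inv_mul M ((isUnit_iff_isUnit_det M).mp hM), one_mulVec]

theorem nonsing_inv_mul_mul_add_one {Ω : Matrix ι ι K} (hΩ : IsUnit Ω) (A : Matrix ι ι K) :
    Ω⁻¹ * (Ω * A + 1) = A + Ω⁻¹ := by
  rw [Matrix.mul_add, nonsing_inv_mul_cancel_left Ω A ((isUnit_iff_isUnit_det Ω).mp hΩ),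
    Matrix.mul_one]

end Matrix

theorem blackLitterman_mean_of_inverse_views {A Ω B : Matrix ι ι K} (hΩ : IsUnit Ω)
    (hAΩ : IsUnit (A + Ω⁻¹)) (δ : K) (π w : ι → K) :
    (A + Ω⁻¹)⁻¹ *ᵥ (A *ᵥ π + Ω⁻¹ *ᵥ (δ • ((Ω * A + 1) * B) *ᵥ w - (Ω * A) *ᵥ π)) =
      δ • B *ᵥ w := by
  have hviews : Ω⁻¹ *ᵥ (δ • ((Ω * A + 1) * B) *ᵥ w - (Ω * A) *ᵥ π) =
      δ • ((A + Ω⁻¹) *ᵥ (B *ᵥ w)) - A *ᵥ π := by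
    rw [mulVec_sub, mulVec_smul, mulVec_mulVec, mulVec_mulVec, ← Matrix.mul_assoc,
      nonsing_inv_mul_mul_add_one hΩ,
      nonsing_inv_mul_cancel_left Ω A ((isUnit_iff_isUnit_det Ω).mp hΩ), ← mulVec_mulVec]
  rw [hviews, add_sub_cancel, mulVec_smul, nonsing_inv_mulVec_mulVec hAΩ]

end

/-- **Inverse optimization identity for optimal market views (Eq. 12).**
With the strict view definition (P = I), setting
`Q* = δ [Ω(τS)⁻¹ + I] [S + ((τS)⁻¹ + Ω⁻¹)⁻¹] w* − Ω(τS)⁻¹ Π`, the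
Black-Litterman posterior built from the views `Q*` yields the prescribed
optimal weights: `(δ S̄)⁻¹ μ̄ = w*`. -/
theorem inverse_optimization_market_views {n : ℕ}
    (S Ω : Matrix (Fin n) (Fin n) ℝ) (hS : S.PosDef) (hΩ : Ω.PosDef)
    (τ δ : ℝ) (hτ : 0 < τ) (hδ : 0 < δ)
    (Pi0 wstar : Fin n → ℝ)
    (Qstar : Fin n → ℝ)
    (hQ : Qstar = δ • ((Ω * (τ • S)⁻¹ + 1) * (S + ((τ • S)⁻¹ + Ω⁻¹)⁻¹)).mulVec wstar
        - (Ω * (τ • S)⁻¹).mulVec Pi0)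
    (Sbar : Matrix (Fin n) (Fin n) ℝ)
    (hSbar : Sbar = S + ((τ • S)⁻¹ + Ω⁻¹)⁻¹)
    (μbar : Fin n → ℝ)
    (hμbar : μbar = ((τ • S)⁻¹ + Ω⁻¹)⁻¹.mulVec
        ((τ • S)⁻¹.mulVec Pi0 + Ω⁻¹.mulVec Qstar)) :
    (δ • Sbar)⁻¹.mulVec μbar = wstar := by
  have hprecision : ((τ • S)⁻¹ + Ω⁻¹).PosDef := (hS.smul hτ).inv.add hΩ.inv
  have hSbar_pos : (δ • Sbar).PosDef := by
    rw [hSbar]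
    exact (hS.add hprecision.inv).smul hδ
  have hμ : μbar = (δ • Sbar) *ᵥ wstar := by
    rw [hμbar, hQ, blackLitterman_mean_of_inverse_views hΩ.isUnit hprecision.isUnit,
      hSbar, smul_mulVec]
  rw [hμ, nonsing_inv_mulVec_mulVec hSbar_pos.isUnit]
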